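/- Let q be a positive integer with distinct prime factors q₁ < … < q_r. Then ∏_{i=1}^{r} (1 + 1/q_i) ≤ K · log log(e^e · q) for some absolute constant K. -/

import Mathlib

/-!
Since `1 + t ≤ exp t`, it suffices to bound `∑_{p ∣ q} 1/p` by `log log x + O(1)`, where
`x = log (e^e q) ≥ log q`. The prime factors `p ≤ x` contribute at most `log log x + O(1)` by
Mertens' second theorem, which follows by partial summation against `1 / log` from Mertens' first
theorem `∑_{p ≤ n} log p / p ≤ log n + O(1)` (Legendre's count of `n!` and Chebyshev's bound
`θ n ≤ n log 4`). The prime factors `p > x` are fewer than `log q / log x`, so they contribute at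
most `1`.
-/

open Finset Real

open Nat (primesLE mem_primesLE)

lemma sum_log_primeFactors_le (m : ℕ) : ∑ p ∈ m.primeFactors, log p ≤ log m := by
  rcases m.eq_zero_or_pos with rfl | hm
  · simp
  have hdvd := m.prod_primeFactors_dvd
  rw [← log_prod fun p hp => by exact_mod_cast (Nat.prime_of_mem_primeFactors hp).ne_zero,
    ← Nat.cast_prod]
  exact log_le_log (by exact_mod_cast Nat.pos_of_dvd_of_pos hdvd hm)
    (by exact_mod_cast Nat.le_of_dvd hm hdvd)

lemma sum_primesLE_div_mul_log (n : ℕ) :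
    ∑ p ∈ primesLE n, ((n / p : ℕ) : ℝ) * log p
      = ∑ m ∈ Ioc 0 n, ∑ p ∈ m.primeFactors, log p := by
  have hfac : ∀ m ∈ Ioc 0 n, m.primeFactors = {p ∈ primesLE n | p ∣ m} := by
    intro m hm
    rw [mem_Ioc] at hm
    ext p
    simp only [Nat.mem_primeFactors, mem_filter, mem_primesLE]
    exact ⟨fun ⟨hp, hpm, _⟩ => ⟨⟨(Nat.le_of_dvd hm.1 hpm).trans hm.2, hp⟩, hpm⟩,
      fun ⟨⟨_, hp⟩, hpm⟩ => ⟨hp, hpm, hm.1.ne'⟩⟩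
  symm
  rw [sum_congr rfl fun m hm => by rw [hfac m hm, sum_filter], sum_comm]
  refine sum_congr rfl fun p _ => ?_
  rw [← sum_filter, sum_const, Nat.Ioc_filter_dvd_card_eq_div, nsmul_eq_mul]

lemma sum_primesLE_div_mul_log_le (n : ℕ) :
    ∑ p ∈ primesLE n, ((n / p : ℕ) : ℝ) * log p ≤ n * log n := by
  rw [sum_primesLE_div_mul_log]
  calc ∑ m ∈ Ioc 0 n, ∑ p ∈ m.primeFactors, log p ≤ ∑ _m ∈ Ioc 0 n, log n := by
        refine sum_le_sum fun m hm => (sum_log_primeFactors_le m).trans ?_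
        rw [mem_Ioc] at hm
        exact log_le_log (by exact_mod_cast hm.1) (by exact_mod_cast hm.2)
    _ = n * log n := by simp

/-- Mertens' first theorem, upper bound. -/
theorem sum_primesLE_log_div_le (n : ℕ) : ∑ p ∈ primesLE n, log p / p ≤ log n + log 4 := by
  rcases n.eq_zero_or_pos with rfl | hn
  · simpa [Nat.primesLE_zero] using log_nonneg (by norm_num)
  have hn' : (0 : ℝ) < n := by exact_mod_cast hn
  have hfloor : ∀ p ∈ primesLE n, n * (log p / p) ≤ ((n / p : ℕ) + 1) * log p := by
    intro p hp
    have hp0 : (0 : ℝ) < p := by exact_mod_cast (Nat.prime_of_mem_primesLE hp).pos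
    have hdiv : (n : ℝ) / p ≤ (n / p : ℕ) + 1 := by
      rw [← Nat.floor_div_eq_div (K := ℝ)]
      exact (Nat.lt_floor_add_one _).le
    calc (n : ℝ) * (log p / p) = n / p * log p := by ring
      _ ≤ ((n / p : ℕ) + 1) * log p := by gcongr
  have htheta : ∑ p ∈ primesLE n, log p ≤ n * log 4 := by
    rw [← Chebyshev.theta_eq_sum_primesLE_log, mul_comm]
    exact Chebyshev.theta_le_log4_mul_x n.cast_nonneg
  refine le_of_mul_le_mul_left ?_ hn'
  calc n * ∑ p ∈ primesLE n, log p / p = ∑ p ∈ primesLE n, n * (log p / p) := mul_sum _ _ _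
    _ ≤ ∑ p ∈ primesLE n, ((n / p : ℕ) + 1) * log p := sum_le_sum hfloor
    _ = ∑ p ∈ primesLE n, ((n / p : ℕ) : ℝ) * log p + ∑ p ∈ primesLE n, log p := by
        rw [← sum_add_distrib]
        exact sum_congr rfl fun p _ => by ring
    _ ≤ n * log n + n * log 4 := add_le_add (sum_primesLE_div_mul_log_le n) htheta
    _ = n * (log n + log 4) := by ring

/-- Partial summation against the decreasing weight `1 / log k`; the loss at each step is
controlled by `1 - log N / log (N + 1) ≤ log (log (N + 1)) - log (log N)`. -/
lemma sum_Icc_div_log_le {a : ℕ → ℝ} {c : ℝ} (ha : ∀ n ≥ 2, ∑ k ∈ Icc 2 n, a k ≤ log n + c)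
    {N : ℕ} (hN : 2 ≤ N) :
    ∑ k ∈ Icc 2 N, a k / log k ≤ log (log N) + (1 - log (log 2) + c / log 2) := by
  have key : ∀ N ≥ 2, ∑ k ∈ Icc 2 N, a k / log k
      ≤ (∑ k ∈ Icc 2 N, a k - c) / log N + log (log N) - log (log 2) + c / log 2 := by
    intro N hN
    induction N, hN using Nat.le_induction with
    | base => simp only [Icc_self, sum_singleton, Nat.cast_ofNat]; exact le_of_eq (by ring)
    | succ N hN ih =>
      have hL : 0 < log N := log_pos (by exact_mod_cast hN)
      have hLL : log N < log (N + 1) := log_lt_log (by positivity) (by linarith)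
      have hstep : (∑ k ∈ Icc 2 N, a k - c) * ((log N)⁻¹ - (log (N + 1))⁻¹)
          ≤ log (log (N + 1)) - log (log N) :=
        calc (∑ k ∈ Icc 2 N, a k - c) * ((log N)⁻¹ - (log (N + 1))⁻¹)
            ≤ log N * ((log N)⁻¹ - (log (N + 1))⁻¹) := by
              gcongr
              · exact sub_nonneg.2 (inv_anti₀ hL hLL.le)
              · linarith [ha N hN]
          _ = 1 - (log (N + 1) / log N)⁻¹ := by field_simp
          _ ≤ log (log (N + 1) / log N) := one_sub_inv_le_log_of_pos (div_pos (hL.trans hLL) hL)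
          _ = log (log (N + 1)) - log (log N) := log_div (hL.trans hLL).ne' hL.ne'
      rw [sum_Icc_succ_top (by omega), sum_Icc_succ_top (by omega)]
      push_cast
      simp only [div_eq_mul_inv] at ih ⊢
      linarith
  have hL : 0 < log N := log_pos (by exact_mod_cast hN)
  have : (∑ k ∈ Icc 2 N, a k - c) / log N ≤ 1 := div_le_one_of_le₀ (by linarith [ha N hN]) hL.le
  linarith [key N hN]

lemma sum_primesLE_eq_sum_Icc {M : Type*} [AddCommMonoid M] (f : ℕ → M) (n : ℕ) :
    ∑ p ∈ primesLE n, f p = ∑ k ∈ Icc 2 n, if k.Prime then f k else 0 := by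
  rw [← sum_filter]
  congr 1
  ext p
  simp only [mem_primesLE, mem_filter, mem_Icc]
  exact ⟨fun ⟨hpn, hp⟩ => ⟨⟨hp.two_le, hpn⟩, hp⟩, fun ⟨⟨_, hpn⟩, hp⟩ => ⟨hpn, hp⟩⟩

/-- Mertens' second theorem, upper bound. -/
theorem sum_primesLE_inv_le {N : ℕ} (hN : 2 ≤ N) :
    ∑ p ∈ primesLE N, 1 / (p : ℝ) ≤ log (log N) + (3 - log (log 2)) := by
  have hlog4 : log 4 = 2 * log 2 := by
    rw [show (4 : ℝ) = 2 ^ 2 by norm_num, log_pow, Nat.cast_ofNat]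
  have h := sum_Icc_div_log_le (a := fun k => if k.Prime then log k / k else 0) (c := log 4)
    (fun n _ => by simpa only [sum_primesLE_eq_sum_Icc] using sum_primesLE_log_div_le n) hN
  rw [hlog4, mul_div_cancel_right₀ _ (log_pos one_lt_two).ne'] at h
  rw [sum_primesLE_eq_sum_Icc]
  refine le_of_eq_of_le (sum_congr rfl fun k hk => ?_) (h.trans_eq (by ring))
  have hk : log k ≠ 0 := (log_pos (by exact_mod_cast (mem_Icc.1 hk).1)).ne'
  split_ifs
  · field_simp
  · simp

lemma sum_inv_le_of_subset_primeFactors {q : ℕ} {s : Finset ℕ} (hs : s ⊆ q.primeFactors)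
    {x : ℝ} (hx : 1 < x) (hxs : ∀ p ∈ s, x < p) :
    ∑ p ∈ s, 1 / (p : ℝ) ≤ log q / (x * log x) := by
  have hlx : 0 < log x := log_pos hx
  have hterm : ∀ p ∈ s, 1 / (p : ℝ) ≤ log p / (x * log x) := by
    intro p hp
    have hxp := hxs p hp
    rw [div_le_div_iff₀ (by linarith) (by positivity), one_mul]
    calc x * log x ≤ p * log x := by gcongr
      _ ≤ log p * p := by rw [mul_comm]; gcongr
  calc ∑ p ∈ s, 1 / (p : ℝ) ≤ ∑ p ∈ s, log p / (x * log x) := sum_le_sum hterm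
    _ ≤ ∑ p ∈ q.primeFactors, log p / (x * log x) :=
        sum_le_sum_of_subset_of_nonneg hs fun p _ _ => by
          have := log_natCast_nonneg p
          positivity
    _ = (∑ p ∈ q.primeFactors, log p) / (x * log x) := (sum_div _ _ _).symm
    _ ≤ log q / (x * log x) := by gcongr; exact sum_log_primeFactors_le q

theorem sum_primeFactors_inv_le (q : ℕ) {x : ℝ} (hx : exp 1 ≤ x) (hqx : log q ≤ x) :
    ∑ p ∈ q.primeFactors, 1 / (p : ℝ) ≤ log (log x) + (4 - log (log 2)) := by
  have hlx : 1 ≤ log x := by rwa [le_log_iff_exp_le (by linarith [exp_pos 1])]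
  have hx2 : (2 : ℝ) ≤ x := by linarith [exp_one_gt_d9]
  set N := ⌊x⌋₊
  have hN : 2 ≤ N := Nat.le_floor (by exact_mod_cast hx2)
  have hsmall : ∑ p ∈ q.primeFactors with p ≤ N, 1 / (p : ℝ) ≤ log (log x) + (3 - log (log 2)) :=
    calc ∑ p ∈ q.primeFactors with p ≤ N, 1 / (p : ℝ) ≤ ∑ p ∈ primesLE N, 1 / (p : ℝ) := by
          refine sum_le_sum_of_subset_of_nonneg (fun p hp => ?_) fun p _ _ => by positivity
          rw [mem_filter, Nat.mem_primeFactors] at hp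
          exact mem_primesLE.2 ⟨hp.2, hp.1.1⟩
      _ ≤ log (log N) + (3 - log (log 2)) := sum_primesLE_inv_le hN
      _ ≤ log (log x) + (3 - log (log 2)) := by
          have : 0 < log N := log_pos (by exact_mod_cast hN)
          gcongr
          exact Nat.floor_le (by linarith)
  have hlarge : ∑ p ∈ q.primeFactors with ¬p ≤ N, 1 / (p : ℝ) ≤ 1 :=
    calc ∑ p ∈ q.primeFactors with ¬p ≤ N, 1 / (p : ℝ) ≤ log q / (x * log x) :=
          sum_inv_le_of_subset_primeFactors (filter_subset _ _) (by linarith) fun p hp =>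
            Nat.lt_of_floor_lt (not_le.1 (mem_filter.1 hp).2)
      _ ≤ 1 := div_le_one_of_le₀ (by nlinarith) (by positivity)
  rw [← sum_filter_add_sum_filter_not _ (· ≤ N)]
  linarith

/-- `∏_{p ∣ q} (1 + 1/p) ≤ K · log log(e^e q)` for an absolute constant `K`. -/
theorem stmt16 :
    ∃ K : ℝ, 0 < K ∧ ∀ q : ℕ, 0 < q →
      ∏ p ∈ q.primeFactors, (1 + 1 / (p : ℝ))
        ≤ K * Real.log (Real.log (Real.exp (Real.exp 1) * q)) := by
  refine ⟨exp (4 - log (log 2)), exp_pos _, fun q hq => ?_⟩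
  have hx : log (exp (exp 1) * q) = exp 1 + log q := by
    rw [log_mul (exp_ne_zero _) (by exact_mod_cast hq.ne'), log_exp]
  have hlogq := log_natCast_nonneg q
  have hlx : 0 < log (log (exp (exp 1) * q)) := log_pos (by rw [hx]; linarith [add_one_le_exp 1])
  calc ∏ p ∈ q.primeFactors, (1 + 1 / (p : ℝ)) ≤ exp (∑ p ∈ q.primeFactors, 1 / (p : ℝ)) :=
        prod_one_add_le_exp_sum _ fun p => by positivity
    _ ≤ exp (log (log (log (exp (exp 1) * q))) + (4 - log (log 2))) :=
        exp_le_exp.2 <| sum_primeFactors_inv_le q (by rw [hx]; linarith)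
          (by rw [hx]; linarith [exp_pos 1])
    _ = exp (4 - log (log 2)) * log (log (exp (exp 1) * q)) := by
        rw [exp_add, exp_log hlx, mul_comm]
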